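/- If v ∈ V is an eigenvector for H, i.e. there is a group homomorphism ψ : H → kˣ with h·v = ψ(h)·v for all h ∈ H, then S·v is an eigenvector for H with the same character: h·(S·v) = ψ(h)·(S·v) for all h ∈ H. (Lemma 5.1(i) of the paper.) -/
import Mathlib


open Matrix

/-- The matrix `(t, Cλ; 0, 1)` as an element of `G = GL₂(F((t)))`. -/
noncomputable def SMat {F : Type*} [Field F] (l : F) : GL (Fin 2) (LaurentSeries F) :=
  Matrix.GeneralLinearGroup.mkOfDetNeZero
    !![HahnSeries.single (1 : ℤ) (1 : F), HahnSeries.C l; 0, 1]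
    (by simp [Matrix.det_fin_two_of])

lemma SMat_coe {F : Type*} [Field F] (l : F) :
    (SMat l : Matrix (Fin 2) (Fin 2) (LaurentSeries F)) =
      !![HahnSeries.single (1 : ℤ) (1 : F), HahnSeries.C l; 0, 1] := rfl

/-- Lemma 5.1(i) of the paper.  Let `F = 𝔽_q`, `q = p^r`,
`L = F((t))`, `G = GL₂(L)`, and let `V` be a `k`-linear `G`-representation.
Let `S·v = Σ_{λ∈F} (t, Cλ; 0, 1)·v`, and let
`H = {(Cλ, 0; 0, Cμ) : λ, μ ∈ Fˣ} ≤ G`.  If `v` is an `H`-eigenvector with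
character `ψ`, then so is `S·v`, with the same character. -/
theorem statement_6 (p r : ℕ) (hp : p.Prime) (hr : 1 ≤ r)
    (F : Type*) [Field F] [Fintype F] (hF : Fintype.card F = p ^ r)
    (k : Type*) [Field k] (V : Type*) [AddCommGroup V] [Module k V]
    (ρ : Representation k (GL (Fin 2) (LaurentSeries F)) V)
    (v : V) (ψ : (Fˣ × Fˣ) →* kˣ)
    (hv : ∀ (a : Fˣ × Fˣ) (h : GL (Fin 2) (LaurentSeries F)),
      (h : Matrix (Fin 2) (Fin 2) (LaurentSeries F)) =
        !![HahnSeries.C (a.1 : F), 0; 0, HahnSeries.C (a.2 : F)] →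
      ρ h v = (ψ a : k) • v) :
    ∀ (a : Fˣ × Fˣ) (h : GL (Fin 2) (LaurentSeries F)),
      (h : Matrix (Fin 2) (Fin 2) (LaurentSeries F)) =
        !![HahnSeries.C (a.1 : F), 0; 0, HahnSeries.C (a.2 : F)] →
      ρ h (∑ l : F, ρ (SMat l) v) = (ψ a : k) • (∑ l : F, ρ (SMat l) v) := by
  intro a h hEq
  have hd : (a.2 : F) ≠ 0 := a.2.ne_zero
  have key : ∀ l : F,
      ρ h (ρ (SMat l) v) = (ψ a : k) • ρ (SMat ((a.1 : F) * l * (a.2 : F)⁻¹)) v := by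
    intro l
    have hcomm : h * SMat l = SMat ((a.1 : F) * l * (a.2 : F)⁻¹) * h := by
      ext : 1
      push_cast
      rw [hEq, SMat_coe, SMat_coe]
      ext i j
      fin_cases i <;> fin_cases j <;>
        simp [Matrix.mul_apply, Fin.sum_univ_succ, mul_comm, mul_left_comm, ← _root_.map_mul,
          mul_assoc, inv_mul_cancel₀ hd, mul_inv_cancel₀ hd]
    calc ρ h (ρ (SMat l) v) = ρ (h * SMat l) v := by rw [_root_.map_mul]; rfl
      _ = ρ (SMat ((a.1 : F) * l * (a.2 : F)⁻¹) * h) v := by rw [hcomm]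
      _ = ρ (SMat ((a.1 : F) * l * (a.2 : F)⁻¹)) (ρ h v) := by rw [_root_.map_mul]; rfl
      _ = ρ (SMat ((a.1 : F) * l * (a.2 : F)⁻¹)) ((ψ a : k) • v) := by rw [hv a h hEq]
      _ = (ψ a : k) • ρ (SMat ((a.1 : F) * l * (a.2 : F)⁻¹)) v := by
            exact (ρ _).map_smul _ _
  rw [map_sum]
  simp_rw [key]
  rw [← Finset.smul_sum]
  congr 1
  exact Fintype.sum_bijective (fun l => (a.1 : F) * l * (a.2 : F)⁻¹)
    ((Equiv.mulLeft₀ (a.1 : F) a.1.ne_zero).trans (Equiv.mulRight₀ _ (inv_ne_zero hd))).bijective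
    _ _ (fun l => rfl)
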